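/- arXiv:2501.01794 — 3 statements merged into one kernel-verified Lean document; each statement's English description precedes it below -/
import Mathlib

section
/- Let S be a gcd-closed set, x ∈ S, and let G_S(x) = {y_1, ..., y_l} be the set of greatest-type divisors of x in S. Then α_{e,S}(x) = x^e + Σ_{∅ ≠ I ⊆ {1,...,l}} (-1)^{|I|} · gcd(x, gcd{y_i : i ∈ I})^e. -/
open Finset

/-- `(ξ_e * μ)(d)`: Dirichlet convolution of `n ↦ n^e` with the Möbius function. -/
def xiMu (e d : ℕ) : ℤ :=
  ∑ a ∈ d.divisors, (a : ℤ) ^ e * ArithmeticFunction.moebius (d / a)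

/-- `α_{e,S}(x) = Σ_{d ∣ x, d ∤ y for all y ∈ S with y < x} (ξ_e * μ)(d)`. -/
def alphaES (e : ℕ) (S : Finset ℕ) (x : ℕ) : ℤ :=
  ∑ d ∈ x.divisors.filter (fun d => ∀ y ∈ S, y < x → ¬ d ∣ y), xiMu e d

/-- The set of greatest-type divisors of `x` in `S`. -/
def GS (S : Finset ℕ) (x : ℕ) : Finset ℕ :=
  S.filter (fun y => y ∣ x ∧ y < x ∧ ∀ z ∈ S, y ∣ z → z ∣ x → z = y ∨ z = x)

/-- An element `x` satisfies condition 𝒞 relative to `S`. -/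
def condCElem (S : Finset ℕ) (x : ℕ) : Prop :=
  ∀ y ∈ GS S x, ∀ z ∈ GS S x, y ≠ z → Nat.lcm y z = x ∧ Nat.gcd y z ∈ GS S y ∩ GS S z

/-- A set satisfies condition 𝒞 if every element with at least two
greatest-type divisors satisfies condition 𝒞. -/
def condCSet (S : Finset ℕ) : Prop :=
  ∀ x ∈ S, 2 ≤ (GS S x).card → condCElem S x

/-- `A_S(a,b) = {u ∈ S : a ∣ u ∣ b, u ≠ a}`. -/
def AS (S : Finset ℕ) (a b : ℕ) : Finset ℕ :=
  S.filter (fun u => a ∣ u ∧ u ∣ b ∧ u ≠ a)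

/-- `c_{rm}` (with `xr, xm` the actual elements): sum of `μ(d)` over `d` with
`d·xr ∣ xm` and `d·xr ∤ t` for all `t ∈ S` with `t < xm`. -/
def cCoef (S : Finset ℕ) (xr xm : ℕ) : ℤ :=
  ∑ d ∈ xm.divisors.filter (fun d => d * xr ∣ xm ∧ ∀ t ∈ S, t < xm → ¬ d * xr ∣ t),
    ArithmeticFunction.moebius d

/-- `g(k,m)` (with `xk, xm` the actual elements). -/
noncomputable def gFun (e : ℕ) (S : Finset ℕ) (xk xm : ℕ) : ℚ :=
  (1 / (alphaES e S xm : ℚ)) *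
    ∑ r ∈ S.filter (fun r => r ∣ xm), (cCoef S r xm : ℚ) * (Nat.lcm xk r : ℚ) ^ e

lemma xiMu_eq (e : ℕ) (he : 0 < e) (d : ℕ) :
    xiMu e d = (((ArithmeticFunction.pow e : ArithmeticFunction ℕ) : ArithmeticFunction ℤ) *
      ArithmeticFunction.moebius) d := by
  rw [ArithmeticFunction.mul_apply, Nat.sum_divisorsAntidiagonal
    (f := fun a b => (((ArithmeticFunction.pow e : ArithmeticFunction ℕ) : ArithmeticFunction ℤ) a) *
      ArithmeticFunction.moebius b)]
  refine Finset.sum_congr rfl fun a _ => ?_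
  simp [ArithmeticFunction.pow_apply, he.ne']

lemma sum_xiMu (e : ℕ) (he : 0 < e) {n : ℕ} (hn : n ≠ 0) :
    ∑ d ∈ n.divisors, xiMu e d = (n : ℤ) ^ e := by
  have h : ∑ d ∈ n.divisors, xiMu e d =
      ((((ArithmeticFunction.pow e : ArithmeticFunction ℕ) : ArithmeticFunction ℤ) *
        ArithmeticFunction.moebius) * (ArithmeticFunction.zeta : ArithmeticFunction ℕ)) n := by
    rw [ArithmeticFunction.coe_mul_zeta_apply]
    exact Finset.sum_congr rfl fun d _ => xiMu_eq e he d
  rw [h, mul_assoc, ArithmeticFunction.moebius_mul_coe_zeta, mul_one]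
  simp [ArithmeticFunction.pow_apply, he.ne']

theorem alphaES_eq_gtd_formula (e : ℕ) (he : 0 < e) (S : Finset ℕ)
    (hpos : ∀ a ∈ S, 0 < a) (hgcd : ∀ a ∈ S, ∀ b ∈ S, Nat.gcd a b ∈ S)
    (x : ℕ) (hx : x ∈ S) (l : ℕ) (y : Fin l → ℕ) (hinj : Function.Injective y)
    (hGS : GS S x = Finset.univ.image y) :
    alphaES e S x = (x : ℤ) ^ e +
      ∑ I ∈ Finset.univ.powerset.filter (fun I : Finset (Fin l) => I ≠ ∅),
        (-1 : ℤ) ^ I.card * ((Nat.gcd x (I.gcd y) : ℕ) : ℤ) ^ e := by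
  classical
  have hx0 : 0 < x := hpos x hx
  -- every proper S-divisor of x divides some greatest-type divisor
  have hmax : ∀ g ∈ S, g ∣ x → g < x → ∃ m ∈ GS S x, g ∣ m := by
    intro g hgS hgdvd hglt
    set T := S.filter (fun z => g ∣ z ∧ z ∣ x ∧ z < x) with hT
    have hTne : T.Nonempty := ⟨g, by simp [hT, hgS, hgdvd, hglt]⟩
    set m := T.max' hTne with hm
    have hmT : m ∈ T := T.max'_mem hTne
    rw [hT, mem_filter] at hmT
    obtain ⟨hmS, hgm, hmx, hmlt⟩ := hmT
    refine ⟨m, ?_, hgm⟩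
    rw [GS, mem_filter]
    refine ⟨hmS, hmx, hmlt, ?_⟩
    intro z hzS hmz hzx
    by_cases hze : z = x
    · exact Or.inr hze
    · left
      have hz0 : 0 < z := hpos z hzS
      have hzlt : z < x := lt_of_le_of_ne (Nat.le_of_dvd hx0 hzx) hze
      have hzT : z ∈ T := by
        rw [hT, mem_filter]; exact ⟨hzS, hgm.trans hmz, hzx, hzlt⟩
      exact le_antisymm (T.le_max' z hzT) (Nat.le_of_dvd hz0 hmz)
  -- reduction of the divisibility condition
  have hfilter : x.divisors.filter (fun d => ∀ y' ∈ S, y' < x → ¬ d ∣ y') =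
      x.divisors.filter (fun d => ∀ i, ¬ d ∣ y i) := by
    refine Finset.filter_congr fun d hd => ?_
    rw [Nat.mem_divisors] at hd
    constructor
    · intro h i hdyi
      have hyi : y i ∈ GS S x := by
        rw [hGS]; exact mem_image_of_mem y (mem_univ i)
      rw [GS, mem_filter] at hyi
      exact h (y i) hyi.1 hyi.2.2.1 hdyi
    · intro h y' hy'S hy'lt hdy'
      have hg : Nat.gcd x y' ∈ S := hgcd x hx y' hy'S
      have hglt : Nat.gcd x y' < x :=
        lt_of_le_of_lt (Nat.le_of_dvd (hpos y' hy'S) (Nat.gcd_dvd_right x y')) hy'lt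
      obtain ⟨m, hmGS, hgm⟩ := hmax _ hg (Nat.gcd_dvd_left x y') hglt
      rw [hGS, mem_image] at hmGS
      obtain ⟨i, _, rfl⟩ := hmGS
      exact h i ((Nat.dvd_gcd hd.1 hdy').trans hgm)
  -- divisors of the gcd as a filter
  have hdiv : ∀ I : Finset (Fin l), (Nat.gcd x (I.gcd y)).divisors =
      x.divisors.filter (fun d => ∀ i ∈ I, d ∣ y i) := by
    intro I
    ext d
    simp only [Nat.mem_divisors, mem_filter]
    constructor
    · rintro ⟨hdvd, -⟩
      exact ⟨⟨hdvd.trans (Nat.gcd_dvd_left _ _), hx0.ne'⟩,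
        fun i hi => (hdvd.trans (Nat.gcd_dvd_right _ _)).trans (Finset.gcd_dvd hi)⟩
    · rintro ⟨⟨h1, -⟩, h2⟩
      refine ⟨Nat.dvd_gcd h1 (Finset.dvd_gcd h2), ?_⟩
      intro hc
      exact hx0.ne' (Nat.gcd_eq_zero_iff.mp hc).1
  have hgcdne : ∀ I : Finset (Fin l), Nat.gcd x (I.gcd y) ≠ 0 := by
    intro I hc; exact hx0.ne' (Nat.gcd_eq_zero_iff.mp hc).1
  -- the full inclusion-exclusion identity
  have key : ∑ I ∈ (univ : Finset (Fin l)).powerset,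
      (-1 : ℤ) ^ I.card * ((Nat.gcd x (I.gcd y) : ℕ) : ℤ) ^ e = alphaES e S x := by
    calc
      ∑ I ∈ (univ : Finset (Fin l)).powerset,
          (-1 : ℤ) ^ I.card * ((Nat.gcd x (I.gcd y) : ℕ) : ℤ) ^ e
        = ∑ I ∈ (univ : Finset (Fin l)).powerset, ∑ d ∈ x.divisors,
            (if ∀ i ∈ I, d ∣ y i then (-1 : ℤ) ^ I.card * xiMu e d else 0) := by
          refine sum_congr rfl fun I _ => ?_
          rw [← sum_xiMu e he (hgcdne I), hdiv I, Finset.mul_sum, Finset.sum_filter]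
      _ = ∑ d ∈ x.divisors, ∑ I ∈ (univ : Finset (Fin l)).powerset,
            (if ∀ i ∈ I, d ∣ y i then (-1 : ℤ) ^ I.card * xiMu e d else 0) := Finset.sum_comm
      _ = ∑ d ∈ x.divisors,
            (if ∀ i, ¬ d ∣ y i then xiMu e d else 0) := by
          refine sum_congr rfl fun d _ => ?_
          have hsub : ∀ I : Finset (Fin l), (∀ i ∈ I, d ∣ y i) ↔
              I ⊆ univ.filter (fun i => d ∣ y i) := by
            intro I
            simp [Finset.subset_iff]
          calc
            ∑ I ∈ (univ : Finset (Fin l)).powerset,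
                (if ∀ i ∈ I, d ∣ y i then (-1 : ℤ) ^ I.card * xiMu e d else 0)
              = ∑ I ∈ (univ : Finset (Fin l)).powerset.filter
                  (fun I => I ⊆ univ.filter (fun i => d ∣ y i)),
                  (-1 : ℤ) ^ I.card * xiMu e d := by
                rw [Finset.sum_filter]
                exact sum_congr rfl fun I _ => if_congr (hsub I) rfl rfl
            _ = ∑ I ∈ (univ.filter (fun i => d ∣ y i)).powerset,
                  (-1 : ℤ) ^ I.card * xiMu e d := by
                congr 1
                ext I
                simp [Finset.mem_powerset]
            _ = (∑ I ∈ (univ.filter (fun i => d ∣ y i)).powerset,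
                  (-1 : ℤ) ^ I.card) * xiMu e d := by rw [Finset.sum_mul]
            _ = (if univ.filter (fun i => d ∣ y i) = ∅ then 1 else 0) * xiMu e d := by
                rw [Finset.sum_powerset_neg_one_pow_card]
            _ = (if ∀ i, ¬ d ∣ y i then xiMu e d else 0) := by
                by_cases hP : ∀ i, ¬ d ∣ y i
                · have : univ.filter (fun i => d ∣ y i) = ∅ := by
                    rw [Finset.filter_eq_empty_iff]; intro i _; exact hP i
                  simp [this, hP]
                · have : univ.filter (fun i => d ∣ y i) ≠ ∅ := by
                    push_neg at hP
                    obtain ⟨i, hi⟩ := hP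
                    intro hc
                    have : i ∈ univ.filter (fun i => d ∣ y i) := by simp [hi]
                    simp [hc] at this
                  simp [this, hP]
      _ = alphaES e S x := by
          rw [alphaES, hfilter, Finset.sum_filter]
  -- split off the empty set
  rw [← key, ← Finset.sum_filter_add_sum_filter_not ((univ : Finset (Fin l)).powerset)
    (fun I => I = ∅)]
  have hempty : ∑ I ∈ (univ : Finset (Fin l)).powerset.filter (fun I => I = ∅),
      (-1 : ℤ) ^ I.card * ((Nat.gcd x (I.gcd y) : ℕ) : ℤ) ^ e = (x : ℤ) ^ e := by
    have h1 : (univ : Finset (Fin l)).powerset.filter (fun I => I = ∅) = {∅} := by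
      ext I; simp
    rw [h1, Finset.sum_singleton]
    simp
  rw [hempty]
end

section
/- Let x be a positive integer satisfying condition C with greatest-type divisors y_1, ..., y_l (l ≥ 2) in a gcd-closed set S. Then for every nonempty subset J ⊆ {1,...,l}, gcd{y_j : j ∈ J} = (∏_{j ∈ J} y_j) · x^{1-|J|}, as an identity of positive rationals. -/
open Finset

lemma nat_lcm_gcd_distrib (a b c : ℕ) (ha : a ≠ 0) (hb : b ≠ 0) (hc : c ≠ 0) :
    Nat.lcm a (Nat.gcd b c) = Nat.gcd (Nat.lcm a b) (Nat.lcm a c) := by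
  have hg : Nat.gcd b c ≠ 0 := Nat.gcd_ne_zero_left hb
  have hab : Nat.lcm a b ≠ 0 := Nat.lcm_ne_zero ha hb
  have hac : Nat.lcm a c ≠ 0 := Nat.lcm_ne_zero ha hc
  apply Nat.eq_of_factorization_eq (Nat.lcm_ne_zero ha hg) (Nat.gcd_ne_zero_left hab)
  intro p
  rw [Nat.factorization_lcm ha hg, Nat.factorization_gcd hab hac,
    Nat.factorization_gcd hb hc, Nat.factorization_lcm ha hb, Nat.factorization_lcm ha hc]
  simp [Finsupp.inf_apply, Finsupp.sup_apply, max_min_distrib_left]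

theorem gcd_subset_eq_prod_div_pow (S : Finset ℕ) (hpos : ∀ a ∈ S, 0 < a)
    (hgcd : ∀ a ∈ S, ∀ b ∈ S, Nat.gcd a b ∈ S)
    (x : ℕ) (hx : x ∈ S) (hxpos : 0 < x) (hC : condCElem S x)
    (l : ℕ) (hl : 2 ≤ l) (y : Fin l → ℕ) (hinj : Function.Injective y)
    (hGS : GS S x = Finset.univ.image y) :
    ∀ J : Finset (Fin l), J.Nonempty →
      ((J.gcd y : ℕ) : ℚ) = (∏ j ∈ J, (y j : ℚ)) * (x : ℚ) ^ ((1 : ℤ) - J.card) := by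
  have hy : ∀ i, y i ∈ GS S x := fun i => by
    rw [hGS]; exact Finset.mem_image_of_mem y (Finset.mem_univ i)
  have hyS : ∀ i, y i ∈ S := fun i => by
    have := hy i; rw [GS, Finset.mem_filter] at this; exact this.1
  have hy0 : ∀ i, y i ≠ 0 := fun i => (hpos _ (hyS i)).ne'
  have hx0 : (x : ℚ) ≠ 0 := by exact_mod_cast hxpos.ne'
  have hlcm : ∀ i j : Fin l, i ≠ j → Nat.lcm (y i) (y j) = x := fun i j hij =>
    (hC _ (hy i) _ (hy j) (fun h => hij (hinj h))).1
  have key : ∀ J : Finset (Fin l), ∀ i ∉ J, J.Nonempty → Nat.lcm (y i) (J.gcd y) = x := by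
    intro J
    induction J using Finset.cons_induction with
    | empty => intro i _ h; exact absurd h (by simp)
    | cons a s ha ih =>
      intro i hi _
      have hia : i ≠ a := fun h => hi (h ▸ Finset.mem_cons_self a s)
      have his : i ∉ s := fun h => hi (Finset.mem_cons_of_mem h)
      simp only [Finset.cons_eq_insert]
      rw [Finset.gcd_insert, gcd_eq_nat_gcd]
      rcases s.eq_empty_or_nonempty with rfl | hs
      · simp [hlcm i a hia]
      · have hg : s.gcd y ≠ 0 := fun h => by
          obtain ⟨j, hj⟩ := hs
          exact hy0 j (Finset.gcd_eq_zero_iff.1 h j hj)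
        rw [nat_lcm_gcd_distrib _ _ _ (hy0 i) (hy0 a) hg, hlcm i a hia, ih i his hs,
          Nat.gcd_self]
  intro J hJ
  induction J using Finset.cons_induction with
  | empty => exact absurd hJ (by simp)
  | cons a s ha ih =>
    simp only [Finset.cons_eq_insert]
    rw [Finset.gcd_insert, gcd_eq_nat_gcd, Finset.prod_insert ha, Finset.card_insert_of_notMem ha]
    rcases s.eq_empty_or_nonempty with rfl | hs
    · simp
    · have hlg : Nat.lcm (y a) (s.gcd y) = x := key s a ha hs
      have hmul : ((Nat.gcd (y a) (s.gcd y) : ℕ) : ℚ) * x = (y a : ℚ) * (s.gcd y : ℕ) := by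
        have := Nat.gcd_mul_lcm (y a) (s.gcd y)
        rw [hlg] at this
        exact_mod_cast this
      have e1 : ((Nat.gcd (y a) (s.gcd y) : ℕ) : ℚ) = (y a : ℚ) * (s.gcd y : ℕ) / x := by
        rw [eq_div_iff hx0]; exact hmul
      rw [e1, ih hs]
      have hcard : (1 : ℤ) - (s.card + 1 : ℕ) = ((1 : ℤ) - s.card) - 1 := by push_cast; ring
      rw [hcard, zpow_sub_one₀ hx0]
      field_simp
end

section
/- Let S = {x_1,...,x_n} be a gcd-closed set, e a positive integer, and 1 ≤ k, m ≤ n with gcd(x_k, x_m) divisible-compatible in the sense that gcd(x_k, x_m) divides gcd of all greatest-type divisors of x_m. Then g(k,m) = x_k^e / gcd(x_k, x_m)^e, in particular g(k,m) is a positive integer. Here g(k,m) = (1/α_{e,S}(x_m)) · Σ_{x_r | x_m} c_{rm} · lcm(x_k, x_r)^e. -/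
/-!
Write `g = gcd(x_k, x_m)`. For `r ∣ x_m` we have `lcm(x_k, r) = (x_k / g) · lcm(g, r)`, so it
suffices to show `Σ_r c_{rm} lcm(g, r)^e = α_{e,S}(x_m)`; then `g(k,m) = (x_k / g)^e`, using
`α_{e,S}(x_m) > 0` (`ξ_e * μ` is Jordan's totient, which is positive for `e ≥ 1`).

Reindexing `c_{rm}` by `D = d · x_r` turns both sides into sums, over the divisors `D` of `x_m`
that divide no smaller element of `S`, of Möbius transforms: of `r ↦ lcm(g, r)^e` restricted to `S`,
and of `r ↦ r^e`. By Möbius inversion the difference `W` of the two transforms satisfies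
`Σ_{D ∣ a} W(D) = lcm(g, a)^e - a^e = 0` for every `a ∈ S` with `g ∣ a`. Since `S` is gcd-closed,
the divisors of `x_m` dividing a smaller element of `S` are those dividing a greatest-type divisor,
and by hypothesis all of these lie in the gcd-closed family `{a ∈ S : g ∣ a}`; inclusion–exclusion
over that family shows that `W` sums to zero on the union of their divisor sets.
-/

open Finset

open ArithmeticFunction ArithmeticFunction.Moebius

def moebiusTransform (h : ℕ → ℤ) (n : ℕ) : ℤ :=
  ∑ d ∈ n.divisors, h d * μ (n / d)

theorem sum_divisors_moebiusTransform (h : ℕ → ℤ) {n : ℕ} (hn : 0 < n) :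
    ∑ d ∈ n.divisors, moebiusTransform h d = h n := by
  refine sum_eq_iff_sum_mul_moebius_eq.2 (fun m _ => ?_) n hn
  simp only [Int.cast_id]
  rw [Nat.sum_divisorsAntidiagonal' (f := fun a b => μ a * h b)]
  exact sum_congr rfl fun _ _ => mul_comm _ _

theorem xiMu_eq_moebiusTransform (e : ℕ) : xiMu e = moebiusTransform (fun a => (a : ℤ) ^ e) :=
  rfl

theorem xiMu_eq_pow_mul_moebius (e d : ℕ) :
    xiMu e d = ((pow e : ArithmeticFunction ℕ) * μ : ArithmeticFunction ℤ) d := by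
  rw [mul_apply, Nat.sum_divisorsAntidiagonal
    (f := fun a b => ((pow e : ArithmeticFunction ℕ) : ArithmeticFunction ℤ) a * μ b)]
  refine sum_congr rfl fun a ha => ?_
  simp [pow_apply, (Nat.pos_of_mem_divisors ha).ne']

theorem xiMu_prime_pow_succ (e : ℕ) {p : ℕ} (hp : p.Prime) (k : ℕ) :
    xiMu e (p ^ (k + 1)) = ((p : ℤ) ^ (k + 1)) ^ e - ((p : ℤ) ^ k) ^ e := by
  have hvanish : ∀ i ∈ range k, ((p ^ i : ℕ) : ℤ) ^ e * μ (p ^ (k + 1) / p ^ i) = 0 := by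
    intro i hi
    rw [mem_range] at hi
    rw [Nat.pow_div (by omega) hp.pos, moebius_apply_prime_pow hp (by omega), if_neg (by omega),
      mul_zero]
  rw [xiMu, Nat.sum_divisors_prime_pow hp, sum_range_succ, sum_range_succ, sum_eq_zero hvanish,
    Nat.pow_div (by omega) hp.pos, Nat.pow_div le_rfl hp.pos, Nat.add_sub_cancel_left,
    Nat.sub_self, pow_one, pow_zero, moebius_apply_prime hp, moebius_apply_one]
  push_cast
  ring

theorem xiMu_pos {e : ℕ} (he : 0 < e) {n : ℕ} (hn : 0 < n) : 0 < xiMu e n := by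
  induction n using Nat.recOnPosPrimePosCoprime with
  | zero => omega
  | one => simp [xiMu]
  | prime_pow p k hp hk =>
    obtain ⟨k, rfl⟩ := Nat.exists_eq_add_of_lt hk
    rw [zero_add, xiMu_prime_pow_succ e hp, sub_pos]
    have hp1 : (1 : ℤ) < p := by exact_mod_cast hp.one_lt
    exact pow_lt_pow_left₀ (pow_lt_pow_right₀ hp1 k.lt_succ_self) (by positivity) he.ne'
  | coprime a b ha hb hab iha ihb =>
    have hmul : ((pow e : ArithmeticFunction ℕ) * μ : ArithmeticFunction ℤ).IsMultiplicative :=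
      isMultiplicative_pow.natCast.mul isMultiplicative_moebius
    rw [xiMu_eq_pow_mul_moebius, hmul.map_mul_of_coprime hab, ← xiMu_eq_pow_mul_moebius,
      ← xiMu_eq_pow_mul_moebius]
    exact mul_pos (iha (by omega)) (ihb (by omega))

theorem Nat.divisors_inter_biUnion_divisors {a : ℕ} (ha : a ≠ 0) {B : Finset ℕ}
    (hB : ∀ b ∈ B, b ≠ 0) :
    a.divisors ∩ B.biUnion Nat.divisors = (B.image (Nat.gcd a)).biUnion Nat.divisors := by
  ext d
  simp only [mem_inter, mem_biUnion, mem_image, Nat.mem_divisors]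
  constructor
  · rintro ⟨⟨hda, -⟩, b, hb, hdb, -⟩
    exact ⟨_, ⟨b, hb, rfl⟩, Nat.dvd_gcd hda hdb, (Nat.gcd_pos_of_pos_left b (Nat.pos_of_ne_zero ha)).ne'⟩
  · rintro ⟨-, ⟨b, hb, rfl⟩, hd, -⟩
    exact ⟨⟨hd.trans (Nat.gcd_dvd_left a b), ha⟩, b, hb, hd.trans (Nat.gcd_dvd_right a b), hB b hb⟩

theorem sum_biUnion_divisors_eq_zero {M : Type*} [AddCommGroup M] {W : ℕ → M} {T : Set ℕ}
    (hT0 : 0 ∉ T) (hTgcd : ∀ a ∈ T, ∀ b ∈ T, Nat.gcd a b ∈ T)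
    (hW : ∀ a ∈ T, ∑ d ∈ a.divisors, W d = 0) (A : Finset ℕ) (hA : ∀ a ∈ A, a ∈ T) :
    ∑ d ∈ A.biUnion Nat.divisors, W d = 0 := by
  induction hn : A.card using Nat.strong_induction_on generalizing A with
  | _ n ih =>
  rcases A.eq_empty_or_nonempty with rfl | ⟨a, ha⟩
  · simp
  have hne : ∀ b ∈ T, b ≠ 0 := fun b hb h => hT0 (h ▸ hb)
  have hrest : ∀ b ∈ A.erase a, b ∈ T := fun b hb => hA b (mem_of_mem_erase hb)
  have hlt : (A.erase a).card < n := hn ▸ card_erase_lt_of_mem ha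
  have hrest_sum := ih _ hlt (A.erase a) hrest rfl
  have hinter_sum : ∑ d ∈ a.divisors ∩ (A.erase a).biUnion Nat.divisors, W d = 0 := by
    rw [Nat.divisors_inter_biUnion_divisors (hne a (hA a ha)) fun b hb => hne b (hrest b hb)]
    refine ih _ (card_image_le.trans_lt hlt) _ ?_ rfl
    simp only [mem_image]
    rintro _ ⟨b, hb, rfl⟩
    exact hTgcd a (hA a ha) b (hrest b hb)
  have hunion := sum_union_inter (s₁ := a.divisors) (s₂ := (A.erase a).biUnion Nat.divisors) (f := W)
  rw [hW a (hA a ha), hrest_sum, hinter_sum, add_zero, add_zero] at hunion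
  rw [← insert_erase ha, biUnion_insert, hunion]

theorem Nat.lcm_eq_div_gcd_mul_lcm_gcd {k n r : ℕ} (hrn : r ∣ n) :
    Nat.lcm k r = k / Nat.gcd k n * Nat.lcm (Nat.gcd k n) r := by
  have hgcd : Nat.gcd k r = Nat.gcd (Nat.gcd k n) r := by
    rw [Nat.gcd_assoc, Nat.gcd_eq_right hrn]
  rw [Nat.lcm, Nat.lcm, ← hgcd, ← Nat.mul_div_assoc _ ((Nat.gcd_dvd_right k r).mul_left _),
    ← mul_assoc, Nat.div_mul_cancel (Nat.gcd_dvd_left k n)]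

def newDivisors (S : Finset ℕ) (x : ℕ) : Finset ℕ :=
  x.divisors.filter (fun d => ∀ y ∈ S, y < x → ¬ d ∣ y)

theorem alphaES_eq_sum_newDivisors (e : ℕ) (S : Finset ℕ) (x : ℕ) :
    alphaES e S x = ∑ d ∈ newDivisors S x, xiMu e d :=
  rfl

theorem alphaES_pos {e : ℕ} (he : 0 < e) {S : Finset ℕ} (hpos : ∀ a ∈ S, 0 < a) {x : ℕ}
    (hx : x ∈ S) : 0 < alphaES e S x := by
  have hx0 := hpos x hx
  refine sum_pos (fun d hd => xiMu_pos he (Nat.pos_of_mem_divisors (mem_filter.1 hd).1))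
    ⟨x, mem_filter.2 ⟨Nat.mem_divisors_self x hx0.ne', fun y hy hyx hxy => ?_⟩⟩
  exact absurd (Nat.le_of_dvd (hpos y hy) hxy) (not_le.2 hyx)

theorem exists_mem_GS_dvd {S : Finset ℕ} {x y : ℕ} (hx : 0 < x) (hy : y ∈ S) (hyx : y ∣ x)
    (hne : y ≠ x) : ∃ z ∈ GS S x, y ∣ z := by
  set C := S.filter (fun z => y ∣ z ∧ z ∣ x ∧ z ≠ x)
  obtain ⟨z, hzC, hmax⟩ := C.exists_max_image id ⟨y, mem_filter.2 ⟨hy, dvd_rfl, hyx, hne⟩⟩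
  obtain ⟨hzS, hyz, hzx, hzne⟩ := mem_filter.1 hzC
  refine ⟨z, mem_filter.2 ⟨hzS, hzx, (Nat.le_of_dvd hx hzx).lt_of_ne hzne, ?_⟩, hyz⟩
  intro w hw hzw hwx
  by_cases hwne : w = x
  · exact Or.inr hwne
  · exact Or.inl <| le_antisymm (hmax w (mem_filter.2 ⟨hw, hyz.trans hzw, hwx, hwne⟩))
      (Nat.le_of_dvd (Nat.pos_of_dvd_of_pos hwx hx) hzw)

theorem newDivisors_eq_sdiff {S : Finset ℕ} (hpos : ∀ a ∈ S, 0 < a)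
    (hgcd : ∀ a ∈ S, ∀ b ∈ S, Nat.gcd a b ∈ S) {x : ℕ} (hx : x ∈ S) :
    newDivisors S x = x.divisors \ (GS S x).biUnion Nat.divisors := by
  ext d
  simp only [newDivisors, GS, mem_filter, mem_sdiff, mem_biUnion, Nat.mem_divisors]
  refine and_congr_right fun ⟨hdx, _⟩ => ⟨?_, ?_⟩
  · rintro hfresh ⟨y, ⟨hyS, -, hyx, -⟩, hdy, -⟩
    exact hfresh y hyS hyx hdy
  · rintro hnot t htS htx hdt
    have hgx : Nat.gcd t x ≠ x := fun h =>
      absurd (Nat.le_of_dvd (hpos t htS) (h ▸ Nat.gcd_dvd_left t x)) (not_le.2 htx)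
    obtain ⟨z, hz, hgz⟩ :=
      exists_mem_GS_dvd (hpos x hx) (hgcd t htS x hx) (Nat.gcd_dvd_right t x) hgx
    exact hnot ⟨z, mem_filter.1 hz, (Nat.dvd_gcd hdt hdx).trans hgz,
      (hpos z (mem_filter.1 hz).1).ne'⟩

theorem cCoef_eq_sum_newDivisors (S : Finset ℕ) {r : ℕ} (hr : r ≠ 0) (x : ℕ) :
    cCoef S r x = ∑ D ∈ (newDivisors S x).filter (r ∣ ·), μ (D / r) := by
  refine sum_nbij' (· * r) (· / r) ?_ ?_ (fun d _ => Nat.mul_div_cancel d (Nat.pos_of_ne_zero hr))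
    (fun D hD => Nat.div_mul_cancel (mem_filter.1 hD).2) ?_
  · intro d hd
    simp only [newDivisors, mem_filter, Nat.mem_divisors] at hd ⊢
    exact ⟨⟨⟨hd.2.1, hd.1.2⟩, hd.2.2⟩, dvd_mul_left r d⟩
  · intro D hD
    simp only [newDivisors, mem_filter, Nat.mem_divisors] at hD ⊢
    rw [Nat.div_mul_cancel hD.2]
    exact ⟨⟨(Nat.div_dvd_of_dvd hD.2).trans hD.1.1.1, hD.1.1.2⟩, hD.1.1.1, hD.1.2⟩
  · intro d _
    rw [Nat.mul_div_cancel d (Nat.pos_of_ne_zero hr)]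

theorem sum_cCoef_mul_eq (S : Finset ℕ) (x : ℕ) (f : ℕ → ℤ) :
    ∑ r ∈ S.filter (· ∣ x), cCoef S r x * f r
      = ∑ D ∈ newDivisors S x, moebiusTransform (fun r => if r ∈ S then f r else 0) D := by
  rcases eq_or_ne x 0 with rfl | hx
  · simp [cCoef, newDivisors]
  calc ∑ r ∈ S.filter (· ∣ x), cCoef S r x * f r
      = ∑ r ∈ S.filter (· ∣ x), ∑ D ∈ (newDivisors S x).filter (r ∣ ·), f r * μ (D / r) := by
        refine sum_congr rfl fun r hr => ?_
        rw [cCoef_eq_sum_newDivisors S (ne_zero_of_dvd_ne_zero hx (mem_filter.1 hr).2), sum_mul]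
        exact sum_congr rfl fun _ _ => mul_comm _ _
    _ = ∑ D ∈ newDivisors S x, ∑ r ∈ D.divisors.filter (· ∈ S), f r * μ (D / r) := by
        refine sum_comm' fun r D => ?_
        simp only [newDivisors, mem_filter, Nat.mem_divisors]
        constructor
        · rintro ⟨⟨hrS, -⟩, hD, hrD⟩
          exact ⟨⟨⟨hrD, ne_zero_of_dvd_ne_zero hD.1.2 hD.1.1⟩, hrS⟩, hD⟩
        · rintro ⟨⟨⟨hrD, -⟩, hrS⟩, hD⟩
          exact ⟨⟨hrS, hrD.trans hD.1.1⟩, hD, hrD⟩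
    _ = _ := by
        simp only [moebiusTransform, ite_mul, zero_mul, sum_filter]

theorem sum_cCoef_mul_eq_alphaES (e : ℕ) {S : Finset ℕ} (hpos : ∀ a ∈ S, 0 < a)
    (hgcd : ∀ a ∈ S, ∀ b ∈ S, Nat.gcd a b ∈ S) {x : ℕ} (hx : x ∈ S) {g : ℕ} (hgx : g ∣ x)
    (hgG : ∀ y ∈ GS S x, g ∣ y) {f : ℕ → ℤ} (hf : ∀ a ∈ S, g ∣ a → f a = (a : ℤ) ^ e) :
    ∑ r ∈ S.filter (· ∣ x), cCoef S r x * f r = alphaES e S x := by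
  set W := fun d => moebiusTransform (fun r => if r ∈ S then f r else 0) d - xiMu e d
  have hW : ∀ a ∈ {a | a ∈ S ∧ g ∣ a}, ∑ d ∈ a.divisors, W d = 0 := by
    rintro a ⟨haS, hga⟩
    have ha := hpos a haS
    rw [sum_sub_distrib, sum_divisors_moebiusTransform _ ha, xiMu_eq_moebiusTransform,
      sum_divisors_moebiusTransform _ ha, if_pos haS, hf a haS hga, sub_self]
  have hGW : ∑ d ∈ (GS S x).biUnion Nat.divisors, W d = 0 :=
    sum_biUnion_divisors_eq_zero (T := {a | a ∈ S ∧ g ∣ a}) (fun h => (hpos 0 h.1).false)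
      (fun a ha b hb => ⟨hgcd a ha.1 b hb.1, Nat.dvd_gcd ha.2 hb.2⟩) hW _
      fun y hy => ⟨(mem_filter.1 hy).1, hgG y hy⟩
  have hsub : (GS S x).biUnion Nat.divisors ⊆ x.divisors := fun d hd => by
    obtain ⟨y, hy, hdy⟩ := mem_biUnion.1 hd
    exact Nat.divisors_subset_of_dvd (hpos x hx).ne' (mem_filter.1 hy).2.1 hdy
  rw [sum_cCoef_mul_eq, alphaES_eq_sum_newDivisors, ← sub_eq_zero, ← sum_sub_distrib,
    newDivisors_eq_sdiff hpos hgcd hx, sum_sdiff_eq_sub hsub, hW x ⟨hx, hgx⟩, hGW, sub_zero]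

theorem gFun_eq_of_gcd_dvd_general (e : ℕ) (he : 0 < e) (S : Finset ℕ)
    (hpos : ∀ a ∈ S, 0 < a) (hgcd : ∀ a ∈ S, ∀ b ∈ S, Nat.gcd a b ∈ S)
    (xk xm : ℕ) (hk : xk ∈ S) (hm : xm ∈ S)
    (hdvd : Nat.gcd xk xm ∣ (GS S xm).gcd id) :
    gFun e S xk xm = (xk : ℚ) ^ e / ((Nat.gcd xk xm : ℕ) : ℚ) ^ e ∧
      ∃ N : ℕ, 0 < N ∧ gFun e S xk xm = (N : ℚ) := by
  set g := Nat.gcd xk xm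
  have hg : g ≠ 0 := (Nat.gcd_pos_of_pos_left xm (hpos xk hk)).ne'
  have hα : (alphaES e S xm : ℚ) ≠ 0 := by exact_mod_cast (alphaES_pos he hpos hm).ne'
  have hkey := sum_cCoef_mul_eq_alphaES e hpos hgcd hm (Nat.gcd_dvd_right xk xm)
    (fun y hy => hdvd.trans (Finset.gcd_dvd hy)) (f := fun r => (Nat.lcm g r : ℤ) ^ e)
    fun a _ hga => by rw [Nat.lcm_eq_right hga]
  have hsum : ∑ r ∈ S.filter (· ∣ xm), (cCoef S r xm : ℚ) * (Nat.lcm xk r : ℚ) ^ e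
      = ((xk / g : ℕ) : ℚ) ^ e * alphaES e S xm := by
    rw [← hkey, Int.cast_sum, mul_sum]
    refine sum_congr rfl fun r hr => ?_
    rw [Nat.lcm_eq_div_gcd_mul_lcm_gcd (mem_filter.1 hr).2]
    push_cast
    ring
  have hN : gFun e S xk xm = ((xk / g : ℕ) : ℚ) ^ e := by
    rw [gFun, hsum]
    field_simp
  refine ⟨by rw [hN, Nat.cast_div (Nat.gcd_dvd_left xk xm) (Nat.cast_ne_zero.2 hg), div_pow],
    (xk / g) ^ e, ?_, by rw [hN, Nat.cast_pow]⟩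
  exact pow_pos (Nat.div_pos (Nat.le_of_dvd (hpos xk hk) (Nat.gcd_dvd_left xk xm))
    (Nat.pos_of_ne_zero hg)) e

theorem gFun_eq_of_gcd_dvd (e : ℕ) (he : 0 < e) (S : Finset ℕ)
    (hpos : ∀ a ∈ S, 0 < a) (hgcd : ∀ a ∈ S, ∀ b ∈ S, Nat.gcd a b ∈ S)
    (xk xm : ℕ) (hk : xk ∈ S) (hm : xm ∈ S)
    (hG : (GS S xm).Nonempty)
    (hdvd : Nat.gcd xk xm ∣ (GS S xm).gcd id) :
    gFun e S xk xm = (xk : ℚ) ^ e / ((Nat.gcd xk xm : ℕ) : ℚ) ^ e ∧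
      ∃ N : ℕ, 0 < N ∧ gFun e S xk xm = (N : ℚ) :=
  gFun_eq_of_gcd_dvd_general e he S hpos hgcd xk xm hk hm hdvd
end
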